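/- arXiv:2105.07959 — 2 statements merged into one kernel-verified Lean document; each statement's English description precedes it below -/
import Mathlib

section
/- There exist a finite item universe U, a set A of two choosers each choosing according to a logit with fixed utilities u(a) : U → ℝ (so each chooser individually obeys the independence of irrelevant alternatives), a prior distribution Pr(a) on A, chooser-dependent choice set assignment probabilities Pr(C | a), two nonempty sets C ⊂ C ∪ {j} ⊆ U with j ∉ C, and an item i ∈ C, such that both Pr(C) and Pr(C ∪ {j}) are positive and the induced observed choice probabilities violate regularity: Pr(i | C ∪ {j}) > Pr(i | C), where Pr(i | C) = Σ_{a∈A} [Pr(C | a)·Pr(a)/Σ_{a'} Pr(C | a')·Pr(a')] · exp(u(a)(i))/Σ_{l∈C} exp(u(a)(l)). Hence choice set confounding with only two IIA choosers can produce choice systems inexpressible by any mixed logit. -/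
open Finset Real

/-- Choice set confounding with only two IIA (logit) choosers can produce a regularity
violation: there exist a finite universe `Fin n`, two logit choosers with fixed utilities,
a prior, chooser-dependent choice set assignment probabilities, a nonempty set `C`, an
item `i ∈ C`, and an item `j ∉ C`, such that both `C` and `C ∪ {j}` have positive
marginal probability and the induced observed probability of choosing `i` is strictly
larger from `C ∪ {j}` than from `C`. -/
theorem exists_two_iia_choosers_regularity_violation :
    ∃ (n : ℕ) (u : Fin 2 → Fin n → ℝ) (prior : Fin 2 → ℝ)
      (setAssign : Fin 2 → Finset (Fin n) → ℝ)
      (C : Finset (Fin n)) (i j : Fin n),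
      (∀ a, 0 ≤ prior a) ∧ (∑ a, prior a = 1) ∧
      (∀ a C', 0 ≤ setAssign a C') ∧
      (∀ a, ∑ C' ∈ Finset.univ.powerset.filter (·.Nonempty), setAssign a C' = 1) ∧
      C.Nonempty ∧ i ∈ C ∧ j ∉ C ∧
      (0 < ∑ a, setAssign a C * prior a) ∧
      (0 < ∑ a, setAssign a (insert j C) * prior a) ∧
      (∑ a, (setAssign a (insert j C) * prior a /
              ∑ a', setAssign a' (insert j C) * prior a') *
          (Real.exp (u a i) / ∑ l ∈ insert j C, Real.exp (u a l)))
        >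
      (∑ a, (setAssign a C * prior a / ∑ a', setAssign a' C * prior a') *
          (Real.exp (u a i) / ∑ l ∈ C, Real.exp (u a l))) := by
  refine ⟨3, fun a k => if a = 1 ∧ k = 0 then 1 else 0, fun _ => 1/2,
    fun a S => if S = (if a = 0 then ({0,1} : Finset (Fin 3)) else {0,1,2}) then 1 else 0,
    {0,1}, 0, 2, fun _ => by norm_num, by norm_num [Fin.sum_univ_two],
    fun a S => by positivity, ?_, ⟨0, by decide⟩, by decide, by decide, ?_, ?_, ?_⟩
  · intro a
    rw [Finset.sum_ite_eq']
    fin_cases a <;> simp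
  · have h2 : ({0,1} : Finset (Fin 3)) ≠ {0,1,2} := by decide
    rw [Fin.sum_univ_two]; norm_num [h2]
  · have h1 : insert (2 : Fin 3) {0,1} = ({0,1,2} : Finset (Fin 3)) := by decide
    have h3 : ({0,1,2} : Finset (Fin 3)) ≠ {0,1} := by decide
    rw [h1, Fin.sum_univ_two]
    norm_num [h3]
  · have h1 : insert (2 : Fin 3) {0,1} = ({0,1,2} : Finset (Fin 3)) := by decide
    have h2 : ({0,1} : Finset (Fin 3)) ≠ {0,1,2} := by decide
    have h3 : ({0,1,2} : Finset (Fin 3)) ≠ {0,1} := by decide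
    have hne : (2 : Fin 3) ≠ 0 := by decide
    have hne2 : (1 : Fin 3) ≠ 0 := by decide
    rw [h1]
    simp only [Fin.sum_univ_two, if_pos rfl, if_neg h2, if_neg h3,
      show ((0:Fin 2) = 1) = False by simp, show ((1:Fin 2) = 1) = True by simp,
      show ((0:Fin 2) = 0) = True by simp, show ((1:Fin 2) = 0) = False by simp [Fin.ext_iff],
      if_true, if_false, true_and, false_and,
      Finset.sum_insert (by decide : (0:Fin 3) ∉ ({1,2}:Finset (Fin 3))),
      Finset.sum_insert (by decide : (0:Fin 3) ∉ ({1}:Finset (Fin 3))),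
      Finset.sum_insert (by decide : (1:Fin 3) ∉ ({2}:Finset (Fin 3))),
      Finset.sum_singleton, if_neg hne, if_neg hne2]
    norm_num
    rw [div_lt_div_iff₀ (by positivity) (by positivity)]
    nlinarith [Real.exp_one_gt_d9, Real.exp_pos 1]
end

section
/- Let U be a finite universe of items, A a finite population of choosers with distribution Pr(a), 𝒞 a finite nonempty collection of nonempty subsets of U, Pr(C | a) choice set assignment probabilities supported on 𝒞 (summing to 1 over C ∈ 𝒞 for each a), and Pr(i | a, C) individual choice probabilities. Let x : A → X assign covariates to choosers and let π : X × 𝒞 → ℝ be propensities. Suppose (1) positivity: 0 < π(x(a), C) < 1 for all a ∈ A and C ∈ 𝒞, and (2) choice set ignorability: Pr(C | a) = π(x(a), C) for all a ∈ A and C ∈ 𝒞 (assignment depends on the chooser only through covariates). Then for every function f : 𝒞 × U → ℝ, the expected inverse-probability-weighted value equals the expected value under uniformly random choice set assignment: Σ_{a∈A} Σ_{C∈𝒞} Σ_{i∈C} Pr(a)·Pr(C | a)·Pr(i | a, C) · f(C, i) / (|𝒞| · π(x(a), C)) = Σ_{a∈A} Σ_{C∈𝒞} Σ_{i∈C} Pr(a)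 · (1/|𝒞|) · Pr(i | a, C) · f(C, i). In particular, taking f(C, i) = log Pr_θ(i | C), the expected IPW-weighted log-likelihood of any choice model over the confounded data equals its expected log-likelihood over an idealized dataset with uniformly random choice sets. -/
open Finset

/-- **Theorem 4.2 (IPW).** Under positivity and choice set ignorability, the expected
inverse-probability-weighted value of any function of the data equals its expected
value under uniformly random choice set assignment. In particular, the expected
IPW-weighted log-likelihood of a choice model over the confounded data equals its
expected log-likelihood over an idealized dataset with uniformly random choice sets. -/
theorem ipw_expected_loglik_eq_uniform
    {U A X : Type*} [Fintype U] [Fintype A] [DecidableEq U]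
    (𝒞 : Finset (Finset U)) (h𝒞_nonempty : 𝒞.Nonempty)
    (h𝒞_sets : ∀ C ∈ 𝒞, C.Nonempty)
    (prior : A → ℝ) (hprior_nonneg : ∀ a, 0 ≤ prior a) (hprior_sum : ∑ a, prior a = 1)
    (setAssign : A → Finset U → ℝ)
    (hset_nonneg : ∀ a C, 0 ≤ setAssign a C)
    (hset_sum : ∀ a, ∑ C ∈ 𝒞, setAssign a C = 1)
    (choice : A → Finset U → U → ℝ)
    (hchoice_nonneg : ∀ a (C : Finset U) (i : U), 0 ≤ choice a C i)
    (hchoice_sum : ∀ a, ∀ C ∈ 𝒞, ∑ i ∈ C, choice a C i = 1)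
    (x : A → X) (propensity : X → Finset U → ℝ)
    (hpos : ∀ a, ∀ C ∈ 𝒞, 0 < propensity (x a) C ∧ propensity (x a) C < 1)
    (hignorable : ∀ a, ∀ C ∈ 𝒞, setAssign a C = propensity (x a) C) :
    ∀ f : Finset U → U → ℝ,
      ∑ a, ∑ C ∈ 𝒞, ∑ i ∈ C,
          prior a * setAssign a C * choice a C i * f C i / (𝒞.card * propensity (x a) C)
        =
      ∑ a, ∑ C ∈ 𝒞, ∑ i ∈ C,
          prior a * ((𝒞.card : ℝ)⁻¹) * choice a C i * f C i := by
  intro f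
  refine Finset.sum_congr rfl fun a _ => Finset.sum_congr rfl fun C hC =>
    Finset.sum_congr rfl fun i _ => ?_
  rw [hignorable a C hC]
  have hp := (hpos a C hC).1.ne'
  have hcard : (𝒞.card : ℝ) ≠ 0 := by
    exact_mod_cast Finset.card_ne_zero_of_mem h𝒞_nonempty.choose_spec
  field_simp
end
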